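/- arXiv:2409.19883 — 2 statements merged into one kernel-verified Lean document; each statement's English description precedes it below -/
import Mathlib

section
/- Let ℓ ≥ 1 be an integer and α ∈ [0,1]. Let (C, T) be a pair of random variables distributed according to F, i.e., T is drawn from geom'(α) and then C is drawn from Binomial(ℓ−T−1, α) if T ≤ ℓ−2, and C = 0 if T ∈ {ℓ−1, ℓ}. Then C + T follows a Binomial(ℓ, α) distribution: for every 0 ≤ k ≤ ℓ, P(C + T = k) = C(ℓ, k)·α^k·(1−α)^{ℓ−k}. In particular the expected total number of adversarial slots per epoch is α·ℓ. -/
open MeasureTheory ProbabilityTheory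
open scoped ENNReal

/-- The probability mass function of the distribution `F` of the pair `(C, T)` (count, tail):
`T ~ geom'(α)` on `{0,…,ℓ}` and, given `T = t ≤ ℓ-2`, `C ~ Binomial(ℓ-t-1, α)`,
while `C = 0` when `T ∈ {ℓ-1, ℓ}`. -/
noncomputable def Fmass (ℓ : ℕ) (α : ℝ≥0∞) (c t : ℕ) : ℝ≥0∞ :=
  if t = ℓ then (if c = 0 then α ^ ℓ else 0)
  else if t + 2 ≤ ℓ then
    (1 - α) * α ^ t * (Nat.choose (ℓ - t - 1) c) * α ^ c * (1 - α) ^ (ℓ - t - 1 - c)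
  else if t + 1 = ℓ then (if c = 0 then (1 - α) * α ^ t else 0)
  else 0

lemma hockey (n : ℕ) : ∀ k, ∑ j ∈ Finset.range (k+1), (n+j).choose j = (n+k+1).choose k := by
  intro k
  induction k with
  | zero => simp
  | succ k ih =>
    rw [Finset.sum_range_succ, ih, show n + (k+1) = n + k + 1 by ring]
    exact (Nat.choose_succ_succ (n+k+1) k).symm

lemma choose_sum (ℓ k : ℕ) (h : k < ℓ) :
    ∑ t ∈ Finset.range (k+1), (ℓ-1-t).choose (k-t) = ℓ.choose k := by
  rw [← Finset.sum_range_reflect]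
  have : ∀ j ∈ Finset.range (k+1),
      (ℓ - 1 - (k + 1 - 1 - j)).choose (k - (k + 1 - 1 - j)) = ((ℓ-1-k)+j).choose j := by
    intro j hj
    simp only [Finset.mem_range] at hj
    congr 1 <;> omega
  rw [Finset.sum_congr rfl this, hockey]
  congr 1
  omega

lemma binom_sum (n : ℕ) (α : ℝ≥0∞) (hα : α ≤ 1) :
    ∑ k ∈ Finset.range (n+1), (Nat.choose n k : ℝ≥0∞) * α ^ k * (1-α) ^ (n-k) = 1 := by
  have h1 : α + (1-α) = 1 := add_tsub_cancel_of_le hα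
  have := add_pow α (1-α) n
  rw [h1, one_pow] at this
  conv_rhs => rw [this]
  apply Finset.sum_congr rfl
  intro k _
  ring

lemma pmf_sum (ℓ : ℕ) (α : ℝ≥0∞) (k : ℕ) (hk : k ≤ ℓ) :
    ∑ t ∈ Finset.range (k+1), Fmass ℓ α (k-t) t
      = (Nat.choose ℓ k : ℝ≥0∞) * α ^ k * (1-α) ^ (ℓ-k) := by
  rcases eq_or_lt_of_le hk with rfl | hkl
  · rw [Finset.sum_range_succ]
    have h0 : ∀ t ∈ Finset.range k, Fmass k α (k-t) t = 0 := by
      intro t ht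
      simp only [Finset.mem_range] at ht
      unfold Fmass
      rw [if_neg (by omega)]
      by_cases h2 : t + 2 ≤ k
      · rw [if_pos h2, Nat.choose_eq_zero_of_lt (by omega)]
        simp
      · rw [if_neg h2, if_pos (by omega), if_neg (by omega)]
    rw [Finset.sum_eq_zero h0, zero_add]
    unfold Fmass
    rw [Nat.sub_self, if_pos rfl, if_pos rfl, Nat.choose_self]
    simp
  · have hterm : ∀ t ∈ Finset.range (k+1),
        Fmass ℓ α (k-t) t = ((ℓ-1-t).choose (k-t) : ℝ≥0∞) * (α^k * (1-α)^(ℓ-k)) := by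
      intro t ht
      simp only [Finset.mem_range] at ht
      unfold Fmass
      rw [if_neg (by omega)]
      by_cases h2 : t + 2 ≤ ℓ
      · rw [if_pos h2]
        have e1 : ℓ - t - 1 = ℓ - 1 - t := by omega
        have e2 : ℓ - t - 1 - (k - t) = ℓ - k - 1 := by omega
        have e3 : α ^ t * α ^ (k - t) = α ^ k := by
          rw [← pow_add]; congr 1; omega
        have e4 : (1-α) * (1-α)^(ℓ-k-1) = (1-α)^(ℓ-k) := by
          rw [← pow_succ']; congr 1; omega
        rw [e2, e1, ← e3, ← e4]
        ring
      · rw [if_neg h2, if_pos (by omega)]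
        have htk : t = k := by omega
        have h1 : ℓ - k = 1 := by omega
        rw [if_pos (by omega : k - t = 0), htk, Nat.sub_self, Nat.choose_zero_right, h1]
        simp [mul_comm]
    rw [Finset.sum_congr rfl hterm, ← Finset.sum_mul, ← Nat.cast_sum, choose_sum ℓ k hkl,
      ← mul_assoc]

/-- if `(C, T)` is distributed according to `F`, then `C + T` follows a
`Binomial(ℓ, α)` distribution, and in particular `E[C + T] = α·ℓ`. -/
theorem count_plus_tail_binomial
    {Ω : Type*} [MeasurableSpace Ω] (μ : Measure Ω) [IsProbabilityMeasure μ]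
    (ℓ : ℕ) (hℓ : 1 ≤ ℓ) (α : ℝ≥0∞) (hα : α ≤ 1)
    (C T : Ω → ℕ) (hmC : Measurable C) (hmT : Measurable T)
    (hF : ∀ c t : ℕ, μ {ω | C ω = c ∧ T ω = t} = Fmass ℓ α c t) :
    (∀ k : ℕ, k ≤ ℓ →
        μ {ω | C ω + T ω = k} = (Nat.choose ℓ k) * α ^ k * (1 - α) ^ (ℓ - k)) ∧
      ∫⁻ ω, ((C ω + T ω : ℕ) : ℝ≥0∞) ∂μ = α * ℓ := by
  set N : Ω → ℕ := fun ω => C ω + T ω with hN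
  have hmN : Measurable N := hmC.add hmT
  have hmNk : ∀ k : ℕ, MeasurableSet {ω | N ω = k} :=
    fun k => hmN (measurableSet_singleton k)
  have hsplit : ∀ k : ℕ, {ω | N ω = k}
      = ⋃ t ∈ Finset.range (k+1), {ω | C ω = k - t ∧ T ω = t} := by
    intro k
    ext ω
    simp only [Set.mem_setOf_eq, Set.mem_iUnion, Finset.mem_range, exists_prop]
    constructor
    · intro h
      have h' : C ω + T ω = k := h
      exact ⟨T ω, by omega, by omega, rfl⟩
    · rintro ⟨t, ht, hc, hT⟩
      show C ω + T ω = k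
      omega
  have hmeas : ∀ c t : ℕ, MeasurableSet {ω | C ω = c ∧ T ω = t} := fun c t =>
    (hmC (measurableSet_singleton c)).inter (hmT (measurableSet_singleton t))
  have key : ∀ k : ℕ, μ {ω | N ω = k} = ∑ t ∈ Finset.range (k+1), Fmass ℓ α (k-t) t := by
    intro k
    rw [hsplit k, measure_biUnion_finset]
    · exact Finset.sum_congr rfl fun t _ => hF (k-t) t
    · intro i _ j _ hij
      apply Set.disjoint_left.mpr
      rintro ω ⟨_, h1⟩ ⟨_, h2⟩
      exact hij (h1.symm.trans h2 : i = j)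
    · exact fun t _ => hmeas (k-t) t
  have part1 : ∀ k : ℕ, k ≤ ℓ →
      μ {ω | N ω = k} = (Nat.choose ℓ k) * α ^ k * (1 - α) ^ (ℓ - k) := by
    intro k hk
    rw [key k, pmf_sum ℓ α k hk]
  refine ⟨part1, ?_⟩
  -- total mass on {0,…,ℓ} is 1
  have hdisj : (↑(Finset.range (ℓ+1)) : Set ℕ).PairwiseDisjoint
      (fun k => {ω | N ω = k}) := by
    intro i _ j _ hij
    apply Set.disjoint_left.mpr
    rintro ω h1 h2
    exact hij ((h1 : N ω = i).symm.trans h2)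
  have hU : μ (⋃ k ∈ Finset.range (ℓ+1), {ω | N ω = k}) = 1 := by
    rw [measure_biUnion_finset hdisj (fun k _ => hmNk k)]
    rw [Finset.sum_congr rfl (fun k hk => part1 k (by
      simp only [Finset.mem_range] at hk; omega))]
    exact binom_sum ℓ α hα
  have hmU : MeasurableSet (⋃ k ∈ Finset.range (ℓ+1), {ω | N ω = k}) :=
    MeasurableSet.biUnion (Finset.range (ℓ+1)).countable_toSet (fun k _ => hmNk k)
  have hcompl : μ (⋃ k ∈ Finset.range (ℓ+1), {ω | N ω = k})ᶜ = 0 := by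
    rw [measure_compl hmU (by simp [hU]), hU, measure_univ, tsub_self]
  have hzero : ∀ k : ℕ, ℓ < k → μ {ω | N ω = k} = 0 := by
    intro k hk
    refine le_antisymm ?_ zero_le
    rw [← hcompl]
    apply measure_mono
    intro ω hω
    simp only [Set.mem_compl_iff, Set.mem_iUnion, Finset.mem_range, not_exists,
      Set.mem_setOf_eq]
    intro j hj hNj
    have : N ω = k := hω
    omega
  -- expectation
  have hind : ∀ ω, ((N ω : ℝ≥0∞))
      = ∑' k : ℕ, Set.indicator {ω' | N ω' = k} (fun _ => (k : ℝ≥0∞)) ω := by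
    intro ω
    rw [tsum_eq_single (N ω)]
    · rw [Set.indicator_of_mem (by simp : ω ∈ {ω' | N ω' = N ω})]
    · intro b hb
      exact Set.indicator_of_notMem (fun h => hb ((h : N ω = b).symm)) _
  calc ∫⁻ ω, ((C ω + T ω : ℕ) : ℝ≥0∞) ∂μ
      = ∫⁻ ω, ∑' k : ℕ, Set.indicator {ω' | N ω' = k} (fun _ => (k : ℝ≥0∞)) ω ∂μ := by
        exact lintegral_congr fun ω => hind ω
    _ = ∑' k : ℕ, ∫⁻ ω, Set.indicator {ω' | N ω' = k} (fun _ => (k : ℝ≥0∞)) ω ∂μ :=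
        lintegral_tsum fun k =>
          (measurable_const.indicator (hmNk k)).aemeasurable
    _ = ∑' k : ℕ, (k : ℝ≥0∞) * μ {ω | N ω = k} := by
        refine tsum_congr fun k => ?_
        rw [lintegral_indicator (hmNk k), setLIntegral_const]
    _ = ∑ k ∈ Finset.range (ℓ+1), (k : ℝ≥0∞) * μ {ω | N ω = k} := by
        apply tsum_eq_sum
        intro k hk
        simp only [Finset.mem_range, not_lt] at hk
        rw [hzero k (by omega), mul_zero]
    _ = ∑ k ∈ Finset.range (ℓ+1),
          (k : ℝ≥0∞) * ((Nat.choose ℓ k) * α ^ k * (1 - α) ^ (ℓ - k)) := by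
        refine Finset.sum_congr rfl fun k hk => ?_
        simp only [Finset.mem_range] at hk
        rw [part1 k (by omega)]
    _ = α * ℓ := by
        obtain ⟨m, rfl⟩ : ∃ m, ℓ = m + 1 := ⟨ℓ - 1, by omega⟩
        rw [Finset.sum_range_succ']
        simp only [Nat.cast_zero, zero_mul, add_zero]
        have hterm : ∀ j ∈ Finset.range (m+1),
            ((j+1 : ℕ) : ℝ≥0∞) * ((Nat.choose (m+1) (j+1)) * α ^ (j+1)
              * (1 - α) ^ (m+1-(j+1)))
            = ((m+1 : ℕ) : ℝ≥0∞) * α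
              * ((Nat.choose m j) * α ^ j * (1 - α) ^ (m - j)) := by
          intro j _
          have hnat : (j+1) * Nat.choose (m+1) (j+1) = (m+1) * Nat.choose m j := by
            rw [mul_comm]
            exact (Nat.add_one_mul_choose_eq m j).symm
          have hcast := congrArg (Nat.cast : ℕ → ℝ≥0∞) hnat
          push_cast at hcast
          have he : m + 1 - (j + 1) = m - j := by omega
          rw [he, pow_succ]
          push_cast
          calc ((j:ℝ≥0∞)+1) * (↑(Nat.choose (m+1) (j+1)) * (α ^ j * α)
                * (1 - α) ^ (m-j))
              = (((j:ℝ≥0∞)+1) * ↑(Nat.choose (m+1) (j+1))) * (α ^ j * α)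
                * (1 - α) ^ (m-j) := by ring
            _ = (((m:ℝ≥0∞)+1) * ↑(Nat.choose m j)) * (α ^ j * α)
                * (1 - α) ^ (m-j) := by rw [hcast]
            _ = ((m:ℝ≥0∞)+1) * α * (↑(Nat.choose m j) * α ^ j * (1 - α) ^ (m-j)) := by
                ring
        rw [Finset.sum_congr rfl hterm, ← Finset.mul_sum, binom_sum m α hα, mul_one]
        push_cast
        ring
end

section
/- Let ℓ ≥ 1 be an integer, α ∈ (0,1), and let ⪯ be any total order on the set O of possible (tail, adjusted-count) observations. Fix t ∈ {0,1,…,ℓ} and let {(C_{i,j}, T_{i,j}) : 0 ≤ i ≤ t, 1 ≤ j ≤ C(t,i)} be mutually independent pairs each distributed according to F, and let maxPair_⪯(t) be the ⪯-maximum of the pairs (T_{i,j}, C_{i,j} − i). Then for every t' ∈ {0,1,…,ℓ}, the probability that the tail component of maxPair_⪯(t) equals t' is strictly positive. (Consequently, the Markov chain on states {0,…,ℓ} induced by any such policy has all transition probabilities positive, so the reduced RANDAO MDP is ergodic.) -/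
open MeasureTheory ProbabilityTheory
open scoped ENNReal

/-- The observation set `O`: pairs `(t, ω)` of a tail `t ∈ {0,…,ℓ}` and an adjusted count
`ω ∈ {-ℓ,…,ℓ}` with `ω ≤ 0` when `t = ℓ` and `ω ≤ ℓ - t - 1` when `t < ℓ`.
(The tail is the first component, the adjusted count the second.) -/
noncomputable def Oset (ℓ : ℕ) : Finset (ℕ × ℤ) :=
  (Finset.range (ℓ + 1) ×ˢ Finset.Icc (-(ℓ : ℤ)) (ℓ : ℤ)).filter
    fun p => (p.1 = ℓ → p.2 ≤ 0) ∧ (p.1 < ℓ → p.2 ≤ (ℓ : ℤ) - p.1 - 1)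

/-!
With positive probability every pair `(C, T)` equals `(0, t')`, since `F` charges `(0, t')` and
the pairs are independent. On that event the observation of index `(i, j)` is `(t', -i)`, which
lies in `O`; hence all observations have tail `t'`, and so does their `⪯`-maximum.
-/

theorem Finset.exists_max_image_of_total {ι β : Type*} (r : β → β → Prop) {s : Finset ι}
    (f : ι → β) (hs : s.Nonempty)
    (htotal : ∀ i ∈ s, ∀ j ∈ s, r (f i) (f j) ∨ r (f j) (f i))
    (htrans : ∀ i ∈ s, ∀ j ∈ s, ∀ k ∈ s, r (f i) (f j) → r (f j) (f k) → r (f i) (f k)) :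
    ∃ i ∈ s, ∀ j ∈ s, r (f j) (f i) := by
  have hrefl : ∀ i ∈ s, r (f i) (f i) := fun i hi => (htotal i hi i hi).elim id id
  induction hs using Finset.Nonempty.cons_induction with
  | singleton a =>
    exact ⟨a, mem_singleton_self a, fun j hj => by
      rw [mem_singleton.1 hj]; exact hrefl a (mem_singleton_self a)⟩
  | cons a s ha hs ih =>
    have hsub : s ⊆ cons a s ha := subset_cons ha
    have haS : a ∈ cons a s ha := mem_cons_self a s
    obtain ⟨i, hi, hmax⟩ := ih (fun i hi j hj => htotal i (hsub hi) j (hsub hj))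
      (fun i hi j hj k hk => htrans i (hsub hi) j (hsub hj) k (hsub hk))
      (fun i hi => hrefl i (hsub hi))
    rcases htotal a haS i (hsub hi) with hai | hia
    · refine ⟨i, hsub hi, fun j hj => ?_⟩
      rcases mem_cons.1 hj with rfl | hj
      exacts [hai, hmax j hj]
    · refine ⟨a, haS, fun j hj => ?_⟩
      rcases mem_cons.1 hj with rfl | hj
      exacts [hrefl j haS, htrans j (hsub hj) i (hsub hi) a haS (hmax j hj) hia]

theorem ProbabilityTheory.iIndepFun.measure_iInter_preimage_pos {Ω ι : Type*} [Fintype ι]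
    {_mΩ : MeasurableSpace Ω} {μ : Measure Ω} {β : ι → Type*} {m : ∀ i, MeasurableSpace (β i)}
    {f : ∀ i, Ω → β i} (h : iIndepFun f μ) {s : ∀ i, Set (β i)} (hs : ∀ i, MeasurableSet (s i))
    (hpos : ∀ i, μ (f i ⁻¹' s i) ≠ 0) :
    0 < μ (⋂ i, f i ⁻¹' s i) := by
  have hprod := h.measure_inter_preimage_eq_mul Finset.univ fun i _ => hs i
  simp only [Finset.mem_univ, Set.iInter_true] at hprod
  rw [hprod]
  exact pos_iff_ne_zero.2 (Finset.prod_ne_zero_iff.2 fun i _ => hpos i)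

theorem Fmass_zero_ne_zero {ℓ : ℕ} {α : ℝ≥0∞} (hα0 : 0 < α) (hα1 : α < 1) {t : ℕ}
    (ht : t ≤ ℓ) : Fmass ℓ α 0 t ≠ 0 := by
  unfold Fmass
  split_ifs <;> first | omega | simp [hα0.ne', (tsub_pos_of_lt hα1).ne']

theorem mk_neg_mem_Oset {ℓ t i : ℕ} (ht : t ≤ ℓ) (hi : i ≤ ℓ) : (t, -(i : ℤ)) ∈ Oset ℓ := by
  simp only [Oset, Finset.mem_filter, Finset.mem_product, Finset.mem_range, Finset.mem_Icc]
  omega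

theorem maxPair_tail_positive_general
    {Ω : Type*} [MeasurableSpace Ω] (μ : Measure Ω)
    (ℓ : ℕ) (α : ℝ≥0∞) (hα0 : 0 < α) (hα1 : α < 1)
    (t : ℕ) (ht : t ≤ ℓ)
    (le : ℕ × ℤ → ℕ × ℤ → Prop)
    (htotal : ∀ a ∈ Oset ℓ, ∀ b ∈ Oset ℓ, le a b ∨ le b a)
    (htrans : ∀ a ∈ Oset ℓ, ∀ b ∈ Oset ℓ, ∀ c ∈ Oset ℓ, le a b → le b c → le a c)
    (V : (Σ i : Fin (t + 1), Fin (Nat.choose t i)) → Ω → ℕ × ℕ)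
    (hindep : iIndepFun V μ)
    (hF : ∀ k, ∀ c t'' : ℕ, μ {ω | V k ω = (c, t'')} = Fmass ℓ α c t'') :
    ∀ t' : ℕ, t' ≤ ℓ →
      0 < μ {ω | ∃ k : (Σ i : Fin (t + 1), Fin (Nat.choose t i)),
        (V k ω).2 = t' ∧
        ∀ k' : (Σ i : Fin (t + 1), Fin (Nat.choose t i)),
          le ((V k' ω).2, ((V k' ω).1 : ℤ) - ((k'.1 : ℕ) : ℤ))
            ((V k ω).2, ((V k ω).1 : ℤ) - ((k.1 : ℕ) : ℤ))} := by
  intro t' ht'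
  have hE : 0 < μ (⋂ k, V k ⁻¹' {(0, t')}) :=
    hindep.measure_iInter_preimage_pos (fun _ => measurableSet_singleton _) fun k =>
      (hF k 0 t').trans_ne (Fmass_zero_ne_zero hα0 hα1 ht')
  refine hE.trans_le (measure_mono fun ω hω => ?_)
  have hV : ∀ k, V k ω = (0, t') := fun k => Set.mem_iInter.1 hω k
  have hobs : ∀ k : (Σ i : Fin (t + 1), Fin (Nat.choose t i)),
      ((V k ω).2, ((V k ω).1 : ℤ) - ((k.1 : ℕ) : ℤ)) ∈ Oset ℓ := fun k => by
    simpa [hV k] using mk_neg_mem_Oset ht' (k.1.is_le.trans ht)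
  obtain ⟨k, -, hk⟩ := Finset.exists_max_image_of_total le
    (fun k => ((V k ω).2, ((V k ω).1 : ℤ) - ((k.1 : ℕ) : ℤ)))
    (Finset.univ_nonempty_iff.2 ⟨⟨0, 0, Nat.choose_pos (Nat.zero_le t)⟩⟩)
    (fun i _ j _ => htotal _ (hobs i) _ (hobs j))
    (fun i _ j _ k _ => htrans _ (hobs i) _ (hobs j) _ (hobs k))
  exact ⟨k, by rw [hV k], fun k' => hk k' (Finset.mem_univ k')⟩

/-- ergodicity of the reduced RANDAO MDP: let `⪯` be any total order on `O`, and
let `(C_{i,j}, T_{i,j})`, `0 ≤ i ≤ t`, `1 ≤ j ≤ C(t,i)`, be mutually independent pairs each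
distributed according to `F`. Then for every `t' ∈ {0,…,ℓ}`, with strictly positive
probability the `⪯`-maximum of the observations `(T_{i,j}, C_{i,j} - i)` has tail
component equal to `t'` (the maximum being witnessed by an index `k` whose observation
`⪯`-dominates all others). -/
theorem maxPair_tail_positive
    {Ω : Type*} [MeasurableSpace Ω] (μ : Measure Ω) [IsProbabilityMeasure μ]
    (ℓ : ℕ) (hℓ : 1 ≤ ℓ) (α : ℝ≥0∞) (hα0 : 0 < α) (hα1 : α < 1)
    (t : ℕ) (ht : t ≤ ℓ)
    (le : ℕ × ℤ → ℕ × ℤ → Prop)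
    (htotal : ∀ a ∈ Oset ℓ, ∀ b ∈ Oset ℓ, le a b ∨ le b a)
    (hantisymm : ∀ a ∈ Oset ℓ, ∀ b ∈ Oset ℓ, le a b → le b a → a = b)
    (htrans : ∀ a ∈ Oset ℓ, ∀ b ∈ Oset ℓ, ∀ c ∈ Oset ℓ, le a b → le b c → le a c)
    (V : (Σ i : Fin (t + 1), Fin (Nat.choose t i)) → Ω → ℕ × ℕ)
    (hmeas : ∀ k, Measurable (V k))
    (hindep : iIndepFun V μ)
    (hF : ∀ k, ∀ c t'' : ℕ, μ {ω | V k ω = (c, t'')} = Fmass ℓ α c t'') :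
    ∀ t' : ℕ, t' ≤ ℓ →
      0 < μ {ω | ∃ k : (Σ i : Fin (t + 1), Fin (Nat.choose t i)),
        (V k ω).2 = t' ∧
        ∀ k' : (Σ i : Fin (t + 1), Fin (Nat.choose t i)),
          le ((V k' ω).2, ((V k' ω).1 : ℤ) - ((k'.1 : ℕ) : ℤ))
            ((V k ω).2, ((V k ω).1 : ℤ) - ((k.1 : ℕ) : ℤ))} :=
  maxPair_tail_positive_general μ ℓ α hα0 hα1 t ht le htotal htrans V hindep hF
end
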